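/- For every integer n ≥ 4 and every real γ ∈ (0,1), both denominators in the definition of 𝓜₁(n,γ) are positive (in particular 3n² + n(2 − 8γ²) + 4γ² − 4 > 0) and 𝓜₁(n,γ) > 0. -/
import Mathlib


open Real

noncomputable section

/-- The constant `𝓜₁(n,γ)` from the second-order energy expansion in the non-umbilic case. -/
def M1const (n : ℕ) (γ : ℝ) : ℝ :=
  ((1 + γ) / 3) *
    ((3 * (n : ℝ) ^ 2 + (n : ℝ) * (16 * γ ^ 2 - 22) + 20 * (1 - γ ^ 2)) /
        (8 * (n : ℝ) * ((n : ℝ) - 1) * (1 - γ ^ 2)) +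
      16 * ((n : ℝ) - 1) * (1 - γ ^ 2) /
        ((n : ℝ) * (3 * (n : ℝ) ^ 2 + (n : ℝ) * (2 - 8 * γ ^ 2) + 4 * γ ^ 2 - 4)))

/-- For `n ≥ 4` and `γ ∈ (0,1)`, both denominators in `𝓜₁(n,γ)` are positive and
`𝓜₁(n,γ) > 0`. -/
theorem statement10 :
    ∀ (n : ℕ) (γ : ℝ), 4 ≤ n → 0 < γ → γ < 1 →
      0 < 8 * (n : ℝ) * ((n : ℝ) - 1) * (1 - γ ^ 2) ∧
      0 < (n : ℝ) * (3 * (n : ℝ) ^ 2 + (n : ℝ) * (2 - 8 * γ ^ 2) + 4 * γ ^ 2 - 4) ∧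
      0 < M1const n γ := by
  intro n γ hn hg hg1
  have hx : (4 : ℝ) ≤ (n : ℝ) := by exact_mod_cast hn
  set x : ℝ := (n : ℝ) with hxdef
  have hg2 : γ ^ 2 < 1 := by nlinarith
  have hg0 : 0 < γ ^ 2 := by positivity
  have hx1 : 0 < x - 1 := by linarith
  have hgg : 0 < 1 - γ ^ 2 := by linarith
  have hB : 0 < 8 * x * (x - 1) * (1 - γ ^ 2) := by positivity
  have hq : 0 < 3 * x ^ 2 + x * (2 - 8 * γ ^ 2) + 4 * γ ^ 2 - 4 := by
    nlinarith [mul_le_mul_of_nonneg_left hg2.le (by linarith : (0:ℝ) ≤ 8 * x - 4)]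
  have hD : 0 < x * (3 * x ^ 2 + x * (2 - 8 * γ ^ 2) + 4 * γ ^ 2 - 4) :=
    mul_pos (by linarith) hq
  refine ⟨hB, hD, ?_⟩
  have hsum : 0 < (3 * x ^ 2 + x * (16 * γ ^ 2 - 22) + 20 * (1 - γ ^ 2)) /
        (8 * x * (x - 1) * (1 - γ ^ 2)) +
      16 * (x - 1) * (1 - γ ^ 2) /
        (x * (3 * x ^ 2 + x * (2 - 8 * γ ^ 2) + 4 * γ ^ 2 - 4)) := by
    rw [div_add_div _ _ (ne_of_gt hB) (ne_of_gt hD)]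
    apply div_pos _ (by positivity)
    nlinarith [sq_nonneg (x - 4), sq_nonneg (γ ^ 2), sq_nonneg (1 - γ ^ 2),
      sq_nonneg ((x - 4) * γ), mul_pos hB hD, sq_nonneg (x * γ - 4 * γ),
      mul_nonneg (mul_nonneg (sub_nonneg.2 hx) (sub_nonneg.2 hx)) (sub_nonneg.2 hx),
      mul_nonneg (sq_nonneg (x - 4)) hg0.le,
      mul_nonneg (sq_nonneg (x - 4)) (sq_nonneg γ),
      mul_nonneg (mul_nonneg (sub_nonneg.2 hx) hg0.le) hg0.le,
      mul_nonneg (sub_nonneg.2 hx) (mul_nonneg hg0.le (sub_nonneg.2 hg2.le)),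
      mul_nonneg (mul_nonneg (sub_nonneg.2 hx) (sub_nonneg.2 hx)) hg0.le]
  have h13 : 0 < (1 + γ) / 3 := by linarith
  unfold M1const
  rw [← hxdef]
  exact mul_pos h13 hsum
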